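/- arXiv:2309.09026 — 3 statements merged into one kernel-verified Lean document; each statement's English description precedes it below -/
import Mathlib

section
/- Let P ⊆ ℝ^d be a finite union of closed integral unit cubes. For 0 ≤ k ≤ d set L_k(P) = Σ_{j=k}^{d} (−1)^{j+k}·binom(j,k)·N_j(P). Then for every positive integer t, #(tP ∩ ℤ^d) = Σ_{k=0}^{d} L_k(P)·t^k. In particular the lattice-point count of the dilates tP is given by a polynomial in t of degree at most d with integer coefficients. -/
/-- The relatively open integral unit cube `B(v, I)`. -/
def openCube {d : ℕ} (v : Fin d → ℤ) (I : Finset (Fin d)) : Set (Fin d → ℝ) :=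
  {x | ∀ i, (i ∈ I → (v i : ℝ) < x i ∧ x i < v i + 1) ∧ (i ∉ I → x i = v i)}

/-- The closed integral unit cube `v + [0,1]^d`. -/
def closedCube {d : ℕ} (v : Fin d → ℤ) : Set (Fin d → ℝ) :=
  {x | ∀ i, (v i : ℝ) ≤ x i ∧ x i ≤ v i + 1}

/-- The set of lattice points of `ℝ^d`. -/
def latticePts (d : ℕ) : Set (Fin d → ℝ) :=
  {x | ∀ i, ∃ m : ℤ, x i = (m : ℝ)}

/-- `N_k(P)`: the number of relatively open integral unit cubes of dimension `k`
contained in `P`. -/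
noncomputable def cubeCount {d : ℕ} (P : Set (Fin d → ℝ)) (k : ℕ) : ℕ :=
  {p : (Fin d → ℤ) × Finset (Fin d) | p.2.card = k ∧ openCube p.1 p.2 ⊆ P}.ncard

/-!
The relatively open unit cubes `B(v, I)` partition `ℝ^d`: `x` lies in the one with `v = ⌊x⌋`
and `I` the set of non-integral coordinates of `x`. A closed unit cube meeting such a cell contains
it, so `P` is the disjoint union of the finitely many cells it contains. A lattice point `y` of
`tP` therefore lies in `t • B(v, I)` for exactly one of these cells, and `t • B(v, I)` contains
`(t - 1) ^ |I|` lattice points; hence `#(tP ∩ ℤ^d) = ∑ j, N_j(P) (t - 1) ^ j`, and expanding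
`(t - 1) ^ j` by the binomial theorem gives the coefficients `L_k(P)`.
-/

open Finset

section

variable {d : ℕ}

open scoped Classical in
noncomputable def cellOf (x : Fin d → ℝ) : (Fin d → ℤ) × Finset (Fin d) :=
  (fun i => ⌊x i⌋, univ.filter fun i => x i ≠ ⌊x i⌋)

theorem mem_openCube_cellOf (x : Fin d → ℝ) : x ∈ openCube (cellOf x).1 (cellOf x).2 := by
  intro i
  simp only [cellOf, mem_filter, mem_univ, true_and, not_not]
  exact ⟨fun hi => ⟨(Int.floor_le _).lt_of_ne' hi, Int.lt_floor_add_one _⟩, id⟩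

theorem cellOf_eq_of_mem_openCube {v : Fin d → ℤ} {I : Finset (Fin d)} {x : Fin d → ℝ}
    (hx : x ∈ openCube v I) : cellOf x = (v, I) := by
  have hfloor : ∀ i, ⌊x i⌋ = v i := fun i => by
    by_cases hi : i ∈ I
    · exact Int.floor_eq_iff.mpr (((hx i).1 hi).imp le_of_lt id)
    · rw [(hx i).2 hi, Int.floor_intCast]
  refine Prod.ext (funext hfloor) (Finset.ext fun i => ?_)
  simp only [cellOf, mem_filter, mem_univ, true_and, hfloor]
  by_cases hi : i ∈ I
  · simpa [hi] using ((hx i).1 hi).1.ne'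
  · simpa [hi] using (hx i).2 hi

theorem mem_openCube_iff_cellOf_eq {v : Fin d → ℤ} {I : Finset (Fin d)} {x : Fin d → ℝ} :
    x ∈ openCube v I ↔ cellOf x = (v, I) :=
  ⟨cellOf_eq_of_mem_openCube, fun h => by simpa only [h] using mem_openCube_cellOf x⟩

theorem openCube_subset_closedCube {v w : Fin d → ℤ} {I : Finset (Fin d)} {x : Fin d → ℝ}
    (hxv : x ∈ openCube v I) (hxw : x ∈ closedCube w) : openCube v I ⊆ closedCube w := by
  intro y hy i
  by_cases hi : i ∈ I
  · obtain ⟨hvx, hxv'⟩ := (hxv i).1 hi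
    obtain ⟨hvy, hyv⟩ := (hy i).1 hi
    have hwv : w i < v i + 1 := by exact_mod_cast (hxw i).1.trans_lt hxv'
    have hvw : v i < w i + 1 := by exact_mod_cast hvx.trans_le (hxw i).2
    have hvw_eq : v i = w i := by omega
    rw [← hvw_eq]
    exact ⟨hvy.le, hyv.le⟩
  · rw [(hy i).2 hi, ← (hxv i).2 hi]
    exact hxw i

def cellsIn (P : Set (Fin d → ℝ)) : Set ((Fin d → ℤ) × Finset (Fin d)) :=
  {p | openCube p.1 p.2 ⊆ P}

theorem biUnion_closedCube_subset_biUnion_cellsIn (S : Set (Fin d → ℤ)) :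
    ⋃ v ∈ S, closedCube v ⊆ ⋃ p ∈ cellsIn (⋃ v ∈ S, closedCube v), openCube p.1 p.2 := by
  intro x hx
  refine Set.mem_biUnion (x := cellOf x) ?_ (mem_openCube_cellOf x)
  obtain ⟨w, hw, hxw⟩ := Set.mem_iUnion₂.1 hx
  exact (openCube_subset_closedCube (mem_openCube_cellOf x) hxw).trans
    (Set.subset_biUnion_of_mem hw)

noncomputable def openCubeCenter (v : Fin d → ℤ) (I : Finset (Fin d)) : Fin d → ℝ :=
  fun i => if i ∈ I then v i + 1 / 2 else v i

theorem openCubeCenter_mem (v : Fin d → ℤ) (I : Finset (Fin d)) :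
    openCubeCenter v I ∈ openCube v I := fun i => by
  by_cases hi : i ∈ I <;> norm_num [openCubeCenter, hi]

theorem cellsIn_closedCube_subset (w : Fin d → ℤ) :
    cellsIn (closedCube w) ⊆ Set.pi Set.univ (fun i => Set.Icc (w i) (w i + 1)) ×ˢ Set.univ := by
  rintro ⟨v, I⟩ hvI
  refine ⟨fun i _ => show v i ∈ Set.Icc (w i) (w i + 1) from ?_, trivial⟩
  have hc := hvI (openCubeCenter_mem v I) i
  by_cases hi : i ∈ I <;> simp only [openCubeCenter, hi, if_true, if_false] at hc
  · have : w i < v i + 1 := by exact_mod_cast (by linarith [hc.1] : (w i : ℝ) < v i + 1)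
    have : v i < w i + 1 := by exact_mod_cast (by linarith [hc.2] : (v i : ℝ) < w i + 1)
    constructor <;> omega
  · exact ⟨by exact_mod_cast hc.1, by exact_mod_cast hc.2⟩

theorem cellsIn_biUnion_closedCube (S : Set (Fin d → ℤ)) :
    cellsIn (⋃ v ∈ S, closedCube v) = ⋃ w ∈ S, cellsIn (closedCube w) := by
  refine subset_antisymm (fun p hp => ?_)
    (Set.iUnion₂_subset fun w hw p hp => hp.trans (Set.subset_biUnion_of_mem hw))
  obtain ⟨w, hw, hcw⟩ := Set.mem_iUnion₂.1 (hp (openCubeCenter_mem p.1 p.2))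
  exact Set.mem_biUnion hw (openCube_subset_closedCube (openCubeCenter_mem p.1 p.2) hcw)

theorem finite_cellsIn_biUnion_closedCube {S : Set (Fin d → ℤ)} (hS : S.Finite) :
    (cellsIn (⋃ v ∈ S, closedCube v)).Finite := by
  rw [cellsIn_biUnion_closedCube]
  exact hS.biUnion fun w _ => ((Set.Finite.pi fun i => Set.finite_Icc _ _).prod
    Set.finite_univ).subset (cellsIn_closedCube_subset w)

theorem ncard_smul_image_inter_latticePts {c : ℝ} (hc : c ≠ 0) (P : Set (Fin d → ℝ)) :
    ((fun x => c • x) '' P ∩ latticePts d).ncard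
      = {y : Fin d → ℤ | (fun i => (y i : ℝ) / c) ∈ P}.ncard := by
  have hcast : Function.Injective fun (y : Fin d → ℤ) (i : Fin d) => (y i : ℝ) :=
    fun a b h => funext fun i => Int.cast_injective (congrFun h i)
  rw [← Set.ncard_image_of_injective _ hcast]
  congr 1
  ext z
  constructor
  · rintro ⟨⟨x, hx, rfl⟩, hz⟩
    choose m hm using hz
    refine ⟨m, ?_, funext fun i => (hm i).symm⟩
    show (fun i => (m i : ℝ) / c) ∈ P
    convert hx using 1
    funext i
    simp [← hm i, hc]
  · rintro ⟨y, hy, rfl⟩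
    refine ⟨⟨_, hy, funext fun i => ?_⟩, fun i => ⟨y i, rfl⟩⟩
    simp [mul_div_cancel₀ _ hc]

noncomputable def dilateOpenCubeLatticePts (t : ℕ) (v : Fin d → ℤ) (I : Finset (Fin d)) :
    Finset (Fin d → ℤ) :=
  Fintype.piFinset fun i => if i ∈ I then Ioo (t * v i) (t * v i + t) else {(t : ℤ) * v i}

theorem mem_dilateOpenCubeLatticePts {t : ℕ} (ht : 0 < t) {v : Fin d → ℤ} {I : Finset (Fin d)}
    {y : Fin d → ℤ} :
    y ∈ dilateOpenCubeLatticePts t v I ↔ (fun i => (y i : ℝ) / t) ∈ openCube v I := by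
  have htR : (0 : ℝ) < t := by exact_mod_cast ht
  simp only [dilateOpenCubeLatticePts, Fintype.mem_piFinset, openCube, Set.mem_ofPred_eq]
  refine forall_congr' fun i => ?_
  by_cases hi : i ∈ I
  · simp only [hi, if_true, mem_Ioo, lt_div_iff₀ htR, div_lt_iff₀ htR, not_true, IsEmpty.forall_iff,
      and_true, true_imp_iff]
    rw [add_one_mul, mul_comm (v i : ℝ)]
    exact_mod_cast Iff.rfl
  · simp only [hi, if_false, mem_singleton, div_eq_iff htR.ne', not_false_iff, true_imp_iff,
      false_imp_iff, true_and]
    constructor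
    · intro h; rw [h]; push_cast; ring
    · intro h; exact_mod_cast (h.trans (mul_comm _ _))

theorem card_dilateOpenCubeLatticePts (t : ℕ) (v : Fin d → ℤ) (I : Finset (Fin d)) :
    (dilateOpenCubeLatticePts t v I).card = (t - 1) ^ I.card := by
  rw [dilateOpenCubeLatticePts, Fintype.card_piFinset]
  have hIoo (a : ℤ) : #(Ioo (t * a) (t * a + t)) = t - 1 := by rw [Int.card_Ioo]; omega
  simp only [apply_ite card, hIoo, card_singleton]
  rw [prod_ite_mem, univ_inter, prod_const]

theorem ncard_div_mem_eq_sum_cellsIn {P : Set (Fin d → ℝ)}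
    {C : Finset ((Fin d → ℤ) × Finset (Fin d))} (hC : ↑C = cellsIn P)
    (hP : P ⊆ ⋃ p ∈ cellsIn P, openCube p.1 p.2) {t : ℕ} (ht : 0 < t) :
    {y : Fin d → ℤ | (fun i => (y i : ℝ) / t) ∈ P}.ncard = ∑ p ∈ C, (t - 1) ^ p.2.card := by
  have hpartition : {y : Fin d → ℤ | (fun i => (y i : ℝ) / t) ∈ P}
      = ↑(C.biUnion fun p => dilateOpenCubeLatticePts t p.1 p.2) := by
    ext y
    simp only [Set.mem_ofPred_eq, coe_biUnion, Set.mem_iUnion, mem_coe,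
      mem_dilateOpenCubeLatticePts ht, exists_prop]
    rw [← hC] at hP
    exact ⟨fun hy => by simpa using hP hy,
      fun ⟨p, hp, hy⟩ => (hC ▸ mem_coe.2 hp : p ∈ cellsIn P) hy⟩
  have hdisj : (C : Set ((Fin d → ℤ) × Finset (Fin d))).PairwiseDisjoint
      fun p => dilateOpenCubeLatticePts t p.1 p.2 := by
    intro p _ q _ hpq
    refine disjoint_left.2 fun y hyp hyq => hpq ?_
    rw [mem_dilateOpenCubeLatticePts ht, mem_openCube_iff_cellOf_eq] at hyp hyq
    exact hyp.symm.trans hyq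
  rw [hpartition, Set.ncard_coe_finset, card_biUnion hdisj]
  simp only [card_dilateOpenCubeLatticePts]

theorem cubeCount_eq_card_filter {P : Set (Fin d → ℝ)}
    {C : Finset ((Fin d → ℤ) × Finset (Fin d))} (hC : ↑C = cellsIn P) (j : ℕ) :
    cubeCount P j = #{p ∈ C | p.2.card = j} := by
  rw [cubeCount, ← Set.ncard_coe_finset, coe_filter]
  congr 1
  ext p
  rw [Set.mem_ofPred_eq, Set.mem_ofPred_eq, ← mem_coe, hC, and_comm]
  rfl

theorem sum_cellsIn_eq_sum_cubeCount {M : Type*} [AddCommMonoid M] {P : Set (Fin d → ℝ)}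
    {C : Finset ((Fin d → ℤ) × Finset (Fin d))} (hC : ↑C = cellsIn P) (f : ℕ → M) :
    ∑ p ∈ C, f p.2.card = ∑ j ∈ range (d + 1), cubeCount P j • f j := by
  have hdim : ∀ p ∈ C, p.2.card ∈ range (d + 1) := fun p _ =>
    mem_range_succ_iff.2 (card_le_univ p.2 |>.trans_eq (Fintype.card_fin d))
  rw [← sum_fiberwise_of_maps_to hdim]
  refine sum_congr rfl fun j _ => ?_
  rw [sum_congr rfl fun p hp => by rw [(mem_filter.1 hp).2], sum_const,
    cubeCount_eq_card_filter hC]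

end

theorem sub_one_pow_eq_sum {R : Type*} [CommRing R] (x : R) (j : ℕ) :
    (x - 1) ^ j = ∑ k ∈ range (j + 1), (-1) ^ (j + k) * (j.choose k : R) * x ^ k := by
  rw [sub_eq_add_neg, add_pow]
  refine sum_congr rfl fun k hk => ?_
  obtain ⟨m, rfl⟩ := Nat.exists_eq_add_of_le (mem_range_succ_iff.1 hk)
  rw [Nat.add_sub_cancel_left, show k + m + k = m + 2 * k by ring, pow_add, pow_mul]
  ring

theorem sum_mul_sub_one_pow_eq_sum {R : Type*} [CommRing R] (N : ℕ → R) (x : R) (d : ℕ) :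
    ∑ j ∈ range (d + 1), N j * (x - 1) ^ j
      = ∑ k ∈ range (d + 1), (∑ j ∈ Icc k d, (-1) ^ (j + k) * (j.choose k : R) * N j) * x ^ k :=
  calc ∑ j ∈ range (d + 1), N j * (x - 1) ^ j
      = ∑ j ∈ range (d + 1), ∑ k ∈ range (j + 1),
          (-1) ^ (j + k) * (j.choose k : R) * N j * x ^ k := by
        refine sum_congr rfl fun j _ => ?_
        rw [sub_one_pow_eq_sum, mul_sum]
        exact sum_congr rfl fun k _ => by ring
    _ = ∑ k ∈ range (d + 1), ∑ j ∈ Icc k d, (-1) ^ (j + k) * (j.choose k : R) * N j * x ^ k :=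
        sum_comm' fun j k => by simp only [mem_range, mem_Icc]; omega
    _ = _ := sum_congr rfl fun k _ => (sum_mul ..).symm

/-- The lattice-point count of the dilates `tP` is the polynomial
`Σ_k L_k(P) t^k` with integer coefficients
`L_k(P) = Σ_{j=k}^d (-1)^{j+k} C(j,k) N_j(P)`. -/
theorem ehrhart_polynomial (d : ℕ) (S : Finset (Fin d → ℤ))
    (P : Set (Fin d → ℝ)) (hP : P = ⋃ v ∈ S, closedCube v)
    (t : ℕ) (ht : 0 < t) :
    ((((fun x : Fin d → ℝ => (t : ℝ) • x) '' P) ∩ latticePts d).ncard : ℤ)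
      = ∑ k ∈ Finset.range (d + 1),
          (∑ j ∈ Finset.Icc k d, (-1 : ℤ) ^ (j + k) * (j.choose k : ℤ) * (cubeCount P j : ℤ))
            * (t : ℤ) ^ k := by
  rw [← set_biUnion_coe] at hP
  subst hP
  obtain ⟨C, hC⟩ := (finite_cellsIn_biUnion_closedCube S.finite_toSet).exists_finset_coe
  rw [ncard_smul_image_inter_latticePts (by positivity),
    ncard_div_mem_eq_sum_cellsIn hC (biUnion_closedCube_subset_biUnion_cellsIn _) ht,
    sum_cellsIn_eq_sum_cubeCount hC, ← sum_mul_sub_one_pow_eq_sum]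
  simp only [smul_eq_mul, Nat.cast_sum, Nat.cast_mul, Nat.cast_pow, Nat.cast_sub ht, Nat.cast_one]
end

section
/- Let P ⊆ ℝ^d be a finite union of closed integral unit cubes and let t be a positive integer. Then the number of lattice points in the topological interior of tP equals Σ_{k=0}^{d} M_k(P)·(t−1)^k, where M_k(P) is the number of relatively open integral unit cubes of dimension k contained in the topological interior of P. -/
/-- `M_k(P)`: the number of relatively open integral unit cubes of dimension `k`
contained in the topological interior of `P`. -/
noncomputable def interiorCubeCount {d : ℕ} (P : Set (Fin d → ℝ)) (k : ℕ) : ℕ :=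
  {p : (Fin d → ℤ) × Finset (Fin d) | p.2.card = k ∧ openCube p.1 p.2 ⊆ interior P}.ncard

noncomputable def vOf {d : ℕ} (x : Fin d → ℝ) : Fin d → ℤ := fun i => ⌊x i⌋

open Classical in
noncomputable def IOf {d : ℕ} (x : Fin d → ℝ) : Finset (Fin d) :=
  Finset.univ.filter fun i => (⌊x i⌋ : ℝ) ≠ x i

lemma mem_IOf {d : ℕ} {x : Fin d → ℝ} {i : Fin d} : i ∈ IOf x ↔ (⌊x i⌋ : ℝ) ≠ x i := by
  classical simp [IOf]

lemma mem_cell_self {d : ℕ} (x : Fin d → ℝ) : x ∈ openCube (vOf x) (IOf x) := by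
  intro i
  constructor
  · intro hi
    exact ⟨lt_of_le_of_ne (Int.floor_le _) (mem_IOf.1 hi), by push_cast [vOf]; exact Int.lt_floor_add_one _⟩
  · intro hi
    exact ((not_ne_iff.1 (fun h => hi (mem_IOf.2 h)))).symm

lemma cell_unique {d : ℕ} {x : Fin d → ℝ} {v : Fin d → ℤ} {I : Finset (Fin d)}
    (hx : x ∈ openCube v I) : v = vOf x ∧ I = IOf x := by
  have hv : ∀ i, v i = ⌊x i⌋ := by
    intro i
    by_cases hi : i ∈ I
    · have h := (hx i).1 hi
      exact ((Int.floor_eq_iff).2 ⟨h.1.le, by exact_mod_cast h.2⟩).symm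
    · have h := (hx i).2 hi
      rw [h]; simp
  constructor
  · funext i; exact hv i
  · ext i
    by_cases hi : i ∈ I
    · have h := (hx i).1 hi
      simp only [hi, true_iff]
      exact mem_IOf.2 (by rw [← hv i]; exact (ne_of_lt h.1))
    · have h := (hx i).2 hi
      simp only [hi, false_iff]
      intro hc
      exact (mem_IOf.1 hc) (by rw [← hv i, h])

lemma cell_subset_closed {d : ℕ} {v w : Fin d → ℤ} {I : Finset (Fin d)} {x : Fin d → ℝ}
    (hx : x ∈ openCube v I) (hw : x ∈ closedCube w) : openCube v I ⊆ closedCube w := by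
  intro y hy i
  by_cases hi : i ∈ I
  · have h1 := (hx i).1 hi
    have h2 := hw i
    have hwv : w i = v i := by
      have hle : w i ≤ v i := by
        have : (w i : ℝ) < v i + 1 := lt_of_le_of_lt h2.1 h1.2
        exact_mod_cast Int.lt_add_one_iff.1 (by exact_mod_cast this)
      have hge : v i ≤ w i := by
        have : (v i : ℝ) < w i + 1 := lt_of_lt_of_le h1.1 h2.2
        exact_mod_cast Int.lt_add_one_iff.1 (by exact_mod_cast this)
      exact le_antisymm hle hge
    have hy1 := (hy i).1 hi
    rw [hwv]
    exact ⟨hy1.1.le, hy1.2.le⟩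
  · have h1 := (hx i).2 hi
    have h2 := (hy i).2 hi
    rw [h2, ← h1]
    exact hw i

lemma sat_P {d : ℕ} {S : Finset (Fin d → ℤ)} {P : Set (Fin d → ℝ)}
    (hP : P = ⋃ v ∈ S, closedCube v) {x : Fin d → ℝ} (hx : x ∈ P) :
    openCube (vOf x) (IOf x) ⊆ P := by
  rw [hP] at hx ⊢
  obtain ⟨w, hwS, hw⟩ := Set.mem_iUnion₂.1 hx
  intro y hy
  exact Set.mem_iUnion₂.2 ⟨w, hwS, cell_subset_closed (mem_cell_self x) hw hy⟩

lemma sat_interior {d : ℕ} {S : Finset (Fin d → ℤ)} {P : Set (Fin d → ℝ)}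
    (hP : P = ⋃ v ∈ S, closedCube v) {x : Fin d → ℝ} (hx : x ∈ interior P) :
    openCube (vOf x) (IOf x) ⊆ interior P := by
  classical
  intro y hy
  obtain ⟨ε, hε, hball⟩ := Metric.mem_nhds_iff.1 (mem_interior_iff_mem_nhds.1 hx)
  set v := vOf x with hv
  set I := IOf x with hI
  set η : ℝ := min ε 1 / 2 with hη
  have hη0 : 0 < η := by positivity
  have hηε : η < ε := by
    have : min ε 1 ≤ ε := min_le_left _ _
    simp only [hη]; linarith
  have hη2 : η ≤ 1 / 2 := by
    have : min ε 1 ≤ 1 := min_le_right _ _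
    simp only [hη]; linarith
  -- the open box around y
  set U : Set (Fin d → ℝ) := Set.univ.pi fun i =>
    if i ∈ I then Set.Ioo (v i : ℝ) (v i + 1) else Set.Ioo ((v i : ℝ) - 1/2) (v i + 1/2) with hU
  have hUopen : IsOpen U := isOpen_set_pi Set.finite_univ (by
    intro i _
    by_cases hi : i ∈ I <;> simp [hi, isOpen_Ioo])
  have hyU : y ∈ U := by
    intro i _
    by_cases hi : i ∈ I
    · simpa [hi] using (hy i).1 hi
    · have := (hy i).2 hi
      simp only [hU, Set.mem_ite_univ_right, hi, if_false, Set.mem_Ioo, this, if_neg]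
      constructor <;> [linarith; linarith]
  have hUP : U ⊆ P := by
    intro z hz
    -- construct z' in the same cell as z, close to x
    set z' : Fin d → ℝ := fun i =>
      if i ∈ I then x i else
        if z i = (v i : ℝ) then x i else
          if (v i : ℝ) < z i then (v i : ℝ) + η else (v i : ℝ) - η with hz'
    have hz'P : z' ∈ P := by
      apply hball
      rw [Metric.mem_ball]
      rw [dist_pi_lt_iff hε]
      intro i
      rw [Real.dist_eq]
      by_cases hi : i ∈ I
      · simp [hz', hi, hε]
      · have hxi : x i = (v i : ℝ) := (mem_cell_self x i).2 hi
        by_cases h0 : z i = (v i : ℝ)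
        · simp [hz', hi, h0, hε]
        · by_cases h1 : (v i : ℝ) < z i
          · simp only [hz', hi, if_neg, h0, h1, if_true, if_false, hxi]
            rw [add_sub_cancel_left, abs_of_pos hη0]; exact hηε
          · simp only [hz', hi, if_neg, h0, h1, if_true, if_false, hxi]
            rw [sub_sub_cancel_left, abs_neg, abs_of_pos hη0]; exact hηε
    -- z is in the cell of z'
    have hzcell : z ∈ openCube (vOf z') (IOf z') := by
      intro i
      by_cases hi : i ∈ I
      · have hxi := (mem_cell_self x i)
        have hz'i : z' i = x i := by simp [hz', hi]
        have hfl : vOf z' i = v i := by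
          simp only [vOf, hz'i]; rfl
        have hmem : i ∈ IOf z' := by
          rw [mem_IOf]
          rw [hz'i]
          show (⌊x i⌋ : ℝ) ≠ x i
          exact mem_IOf.1 hi
        constructor
        · intro _
          rw [hfl]
          have := hz i (Set.mem_univ i)
          simpa [hi] using this
        · intro hc; exact absurd hmem hc
      · have hxi : x i = (v i : ℝ) := (mem_cell_self x i).2 hi
        have hzi := hz i (Set.mem_univ i)
        simp only [hU, hi, if_neg, if_false] at hzi
        by_cases h0 : z i = (v i : ℝ)
        · have hz'i : z' i = (v i : ℝ) := by simp [hz', hi, h0, hxi]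
          have hfl : vOf z' i = v i := by simp [vOf, hz'i]
          have hmem : i ∉ IOf z' := by
            rw [mem_IOf]; push_neg; rw [hz'i]; norm_num
          exact ⟨fun hc => absurd hc (by simpa using hmem), fun _ => by rw [hfl, h0]⟩
        · by_cases h1 : (v i : ℝ) < z i
          · have hz'i : z' i = (v i : ℝ) + η := by simp [hz', hi, h0, h1]
            have hfl : vOf z' i = v i := by
              simp only [vOf, hz'i]
              rw [Int.floor_eq_iff]
              constructor
              · linarith
              · push_cast; linarith
            have hmem : i ∈ IOf z' := by
              rw [mem_IOf, hz'i]
              show (⌊(v i : ℝ) + η⌋ : ℝ) ≠ _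
              have : ⌊(v i : ℝ) + η⌋ = v i := by rw [← hz'i]; exact hfl
              rw [this]
              intro hc
              nlinarith [hc]
            refine ⟨fun _ => ?_, fun hc => absurd hmem hc⟩
            rw [hfl]
            exact ⟨h1, by push_cast; linarith [hzi.2]⟩
          · have hlt : z i < (v i : ℝ) := lt_of_le_of_ne (not_lt.1 h1) h0
            have hz'i : z' i = (v i : ℝ) - η := by simp [hz', hi, h0, h1]
            have hfl : vOf z' i = v i - 1 := by
              simp only [vOf, hz'i]
              rw [Int.floor_eq_iff]
              constructor
              · push_cast; linarith
              · push_cast; linarith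
            have hmem : i ∈ IOf z' := by
              rw [mem_IOf, hz'i]
              show (⌊(v i : ℝ) - η⌋ : ℝ) ≠ _
              have : ⌊(v i : ℝ) - η⌋ = v i - 1 := by rw [← hz'i]; exact hfl
              rw [this]
              push_cast
              intro hc
              nlinarith [hc]
            refine ⟨fun _ => ?_, fun hc => absurd hmem hc⟩
            rw [hfl]
            push_cast
            exact ⟨by linarith [hzi.1], by linarith⟩

    exact sat_P hP hz'P hzcell
  exact mem_interior_iff_mem_nhds.2 (Filter.mem_of_superset (hUopen.mem_nhds hyU) hUP)

lemma cell_v_mem {d : ℕ} {v w : Fin d → ℤ} {I : Finset (Fin d)} {x : Fin d → ℝ}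
    (hx : x ∈ openCube v I) (hw : x ∈ closedCube w) (i : Fin d) :
    v i = w i ∨ v i = w i + 1 := by
  by_cases hi : i ∈ I
  · left
    have h1 := (hx i).1 hi
    have h2 := hw i
    have hle : w i ≤ v i := by
      have : (w i : ℝ) < v i + 1 := lt_of_le_of_lt h2.1 h1.2
      exact_mod_cast Int.lt_add_one_iff.1 (by exact_mod_cast this)
    have hge : v i ≤ w i := by
      have : (v i : ℝ) < w i + 1 := lt_of_lt_of_le h1.1 h2.2
      exact_mod_cast Int.lt_add_one_iff.1 (by exact_mod_cast this)
    omega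
  · have h1 := (hx i).2 hi
    have h2 := hw i
    rw [h1] at h2
    have ha : w i ≤ v i := by exact_mod_cast h2.1
    have hb : v i ≤ w i + 1 := by exact_mod_cast h2.2
    omega

noncomputable def midPt {d : ℕ} (v : Fin d → ℤ) (I : Finset (Fin d)) : Fin d → ℝ :=
  fun i => if i ∈ I then (v i : ℝ) + 1/2 else (v i : ℝ)

lemma midPt_mem {d : ℕ} (v : Fin d → ℤ) (I : Finset (Fin d)) : midPt v I ∈ openCube v I := by
  intro i
  constructor
  · intro hi; simp [midPt, hi]; norm_num
  · intro hi; simp [midPt, hi]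

def cand {d : ℕ} (t : ℕ) (I : Finset (Fin d)) : Finset (Fin d → ℕ) :=
  Fintype.piFinset fun i => if i ∈ I then Finset.Ioo 0 t else {0}

noncomputable def gMap {d : ℕ} (t : ℕ) (v : Fin d → ℤ) (c : Fin d → ℕ) : Fin d → ℝ :=
  fun i => (v i : ℝ) + (c i : ℝ) / (t : ℝ)

lemma card_cand {d : ℕ} (t : ℕ) (I : Finset (Fin d)) : (cand t I).card = (t - 1) ^ I.card := by
  classical
  rw [cand, Fintype.card_piFinset]
  have h : ∀ i : Fin d, (if i ∈ I then Finset.Ioo 0 t else {0}).card = if i ∈ I then t - 1 else 1 := by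
    intro i; by_cases hi : i ∈ I <;> simp [hi, Nat.card_Ioo]
  rw [Finset.prod_congr rfl fun i _ => h i]
  rw [Finset.prod_ite_mem, Finset.univ_inter, Finset.prod_const]

lemma gMap_inj {d : ℕ} {t : ℕ} (ht : 0 < t) (v : Fin d → ℤ) :
    Function.Injective (gMap t v) := by
  intro c c' h
  funext i
  have := congrFun h i
  simp only [gMap] at this
  have htR : (0:ℝ) < t := by exact_mod_cast ht
  have : (c i : ℝ) = c' i := by
    field_simp at this
    linarith
  exact_mod_cast this

lemma cellPts_eq {d : ℕ} {t : ℕ} (ht : 0 < t) (v : Fin d → ℤ) (I : Finset (Fin d)) :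
    openCube v I ∩ {x : Fin d → ℝ | ∀ i, ∃ m : ℤ, (t : ℝ) * x i = m}
      = ↑((cand t I).image (gMap t v)) := by
  classical
  have htR : (0:ℝ) < t := by exact_mod_cast ht
  ext x
  simp only [Set.mem_inter_iff, Set.mem_setOf_eq, Finset.coe_image, Set.mem_image,
    Finset.mem_coe, cand, Fintype.mem_piFinset]
  constructor
  · rintro ⟨hx, hm⟩
    choose m hmeq using hm
    refine ⟨fun i => (m i - t * v i).toNat, fun i => ?_, ?_⟩
    · by_cases hi : i ∈ I
      · have h1 := (hx i).1 hi
        have hlo : (t : ℝ) * v i < m i := by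
          rw [← hmeq i]
          exact mul_lt_mul_of_pos_left h1.1 htR
        have hhi : (m i : ℝ) < t * v i + t := by
          rw [← hmeq i]
          nlinarith [h1.2]
        have hlo' : (t : ℤ) * v i < m i := by exact_mod_cast hlo
        have hhi' : m i < (t : ℤ) * v i + t := by exact_mod_cast hhi
        simp only [hi, if_true, Finset.mem_Ioo]
        omega
      · have h1 := (hx i).2 hi
        have : (m i : ℝ) = t * v i := by rw [← hmeq i, h1]
        have h2 : m i = (t : ℤ) * v i := by exact_mod_cast this
        simp [hi, h2]
    · funext i
      have := hmeq i
      simp only [gMap]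
      by_cases hi : i ∈ I
      · have h1 := (hx i).1 hi
        have hlo : (t : ℤ) * v i ≤ m i := by
          have : (t : ℝ) * v i < m i := by
            rw [← hmeq i]; exact mul_lt_mul_of_pos_left h1.1 htR
          exact_mod_cast this.le
        have hnn : (0:ℤ) ≤ m i - t * v i := by omega
        have hcast : (((m i - t * v i).toNat : ℕ) : ℝ) = (m i : ℝ) - t * v i := by
          rw [← Int.cast_natCast, Int.toNat_of_nonneg hnn]
          push_cast; ring
        rw [hcast, ← hmeq i]
        field_simp
        ring
      · have h1 := (hx i).2 hi
        have : (m i : ℝ) = t * v i := by rw [← hmeq i, h1]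
        have h2 : m i = (t : ℤ) * v i := by exact_mod_cast this
        simp [h2, h1]
  · rintro ⟨c, hc, rfl⟩
    constructor
    · intro i
      have hci := hc i
      constructor
      · intro hi
        simp only [hi, if_true, Finset.mem_Ioo] at hci
        have h0 : (0 : ℝ) < c i := by exact_mod_cast hci.1
        have h1 : (c i : ℝ) < t := by exact_mod_cast hci.2
        constructor
        · simp only [gMap]
          have : 0 < (c i : ℝ) / t := div_pos h0 htR
          linarith
        · simp only [gMap]
          have : (c i : ℝ) / t < 1 := (div_lt_one htR).2 h1
          linarith
      · intro hi
        simp only [hi, if_false, Finset.mem_singleton] at hci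
        simp [gMap, hci]
    · intro i
      refine ⟨t * v i + c i, ?_⟩
      simp only [gMap]
      push_cast
      field_simp


open Pointwise in
/-- The number of lattice points in the topological interior of the dilate `tP`
equals `Σ_k M_k(P) (t-1)^k`. -/
theorem card_interior_latticePts_dilate (d : ℕ) (S : Finset (Fin d → ℤ))
    (P : Set (Fin d → ℝ)) (hP : P = ⋃ v ∈ S, closedCube v)
    (t : ℕ) (ht : 0 < t) :
    (interior ((fun x : Fin d → ℝ => (t : ℝ) • x) '' P) ∩ latticePts d).ncard
      = ∑ k ∈ Finset.range (d + 1), interiorCubeCount P k * (t - 1) ^ k := by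

  classical
  have htR : (t : ℝ) ≠ 0 := Nat.cast_ne_zero.2 ht.ne'
  set f : (Fin d → ℝ) → (Fin d → ℝ) := fun x => (t : ℝ) • x with hf
  have hfinj : Function.Injective f := smul_right_injective _ htR
  set Dt : Set (Fin d → ℝ) := {x | ∀ i, ∃ m : ℤ, (t : ℝ) * x i = m} with hDt
  have hpre : f ⁻¹' latticePts d = Dt := by
    ext x
    simp [hf, latticePts, hDt, Pi.smul_apply, smul_eq_mul]
  have himg : f '' P = (t : ℝ) • P := Set.image_smul
  have hA : interior (f '' P) ∩ latticePts d = f '' (interior P ∩ Dt) := by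
    rw [himg, interior_smul₀ htR, ← Set.image_smul (a := (t:ℝ)) (t := interior P), ← hf,
      ← hpre, Set.image_inter_preimage]
  rw [hA, Set.ncard_image_of_injective _ hfinj]
  set pts : (Fin d → ℤ) × Finset (Fin d) → Finset (Fin d → ℝ) :=
    fun p => (cand t p.2).image (gMap t p.1) with hpts
  have hptseq : ∀ p : (Fin d → ℤ) × Finset (Fin d),
      (↑(pts p) : Set (Fin d → ℝ)) = openCube p.1 p.2 ∩ Dt :=
    fun p => (cellPts_eq ht p.1 p.2).symm
  set Ffin : Finset ((Fin d → ℤ) × Finset (Fin d)) :=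
    ((S.biUnion fun w => Fintype.piFinset fun i => ({w i, w i + 1} : Finset ℤ)) ×ˢ
      Finset.univ).filter (fun p => openCube p.1 p.2 ⊆ interior P) with hFfin
  have hmemF : ∀ p : (Fin d → ℤ) × Finset (Fin d),
      p ∈ Ffin ↔ openCube p.1 p.2 ⊆ interior P := by
    intro p
    rw [hFfin, Finset.mem_filter]
    constructor
    · exact fun h => h.2
    · intro h
      refine ⟨Finset.mem_product.2 ⟨?_, Finset.mem_univ _⟩, h⟩
      have hmid : midPt p.1 p.2 ∈ P := interior_subset (h (midPt_mem p.1 p.2))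
      rw [hP] at hmid
      obtain ⟨w, hwS, hw⟩ := Set.mem_iUnion₂.1 hmid
      refine Finset.mem_biUnion.2 ⟨w, hwS, Fintype.mem_piFinset.2 fun i => ?_⟩
      have h2 := cell_v_mem (midPt_mem p.1 p.2) hw i
      rcases h2 with h2 | h2 <;> simp [h2]
  have hB : interior P ∩ Dt = ↑(Ffin.biUnion pts) := by
    rw [Finset.coe_biUnion]
    ext x
    simp only [Set.mem_iUnion, Finset.mem_coe, Set.mem_inter_iff]
    constructor
    · rintro ⟨hxi, hxd⟩
      refine ⟨(vOf x, IOf x), (hmemF _).2 (sat_interior hP hxi), ?_⟩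
      have hx2 : x ∈ openCube (vOf x) (IOf x) ∩ Dt := ⟨mem_cell_self x, hxd⟩
      rw [← hptseq (vOf x, IOf x)] at hx2
      exact hx2
    · rintro ⟨p, hpF, hxp⟩
      have hx2 : x ∈ openCube p.1 p.2 ∩ Dt := by
        rw [← hptseq p]
        exact hxp
      exact ⟨(hmemF p).1 hpF hx2.1, hx2.2⟩
  rw [hB, Set.ncard_coe_finset]
  have hdisj : ∀ p ∈ Ffin, ∀ q ∈ Ffin, p ≠ q → Disjoint (pts p) (pts q) := by
    intro p _ q _ hpq
    rw [Finset.disjoint_left]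
    intro x hxp hxq
    have h1 : x ∈ openCube p.1 p.2 ∩ Dt := by rw [← hptseq p]; exact hxp
    have h2 : x ∈ openCube q.1 q.2 ∩ Dt := by rw [← hptseq q]; exact hxq
    obtain ⟨ha, hb⟩ := cell_unique h1.1
    obtain ⟨hc, hd⟩ := cell_unique h2.1
    exact hpq (Prod.ext (ha.trans hc.symm) (hb.trans hd.symm))
  rw [Finset.card_biUnion hdisj]
  have hcard : ∀ p : (Fin d → ℤ) × Finset (Fin d), (pts p).card = (t - 1) ^ p.2.card := by
    intro p
    rw [hpts]
    rw [Finset.card_image_of_injective _ (gMap_inj ht p.1), card_cand]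
  simp only [hcard]
  have hmaps : ∀ p ∈ Ffin, p.2.card ∈ Finset.range (d + 1) := by
    intro p _
    rw [Finset.mem_range]
    exact Nat.lt_succ_of_le (le_trans (Finset.card_le_univ _) (by simp))
  rw [← Finset.sum_fiberwise_of_maps_to hmaps (fun p => (t - 1) ^ p.2.card)]
  refine Finset.sum_congr rfl fun k hk => ?_
  have hsum : ∑ p ∈ Ffin.filter (fun p => p.2.card = k), (t - 1) ^ p.2.card
      = (Ffin.filter (fun p => p.2.card = k)).card * (t - 1) ^ k := by
    rw [Finset.sum_congr rfl (fun p hp => by rw [(Finset.mem_filter.1 hp).2]),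
      Finset.sum_const, smul_eq_mul]
  rw [hsum]
  congr 1
  have hseteq : {p : (Fin d → ℤ) × Finset (Fin d) | p.2.card = k ∧ openCube p.1 p.2 ⊆ interior P}
      = ↑(Ffin.filter fun p => p.2.card = k) := by
    ext p
    simp only [Set.mem_setOf_eq, Finset.coe_filter, Finset.mem_filter]
    constructor
    · rintro ⟨h1, h2⟩
      exact ⟨(hmemF p).2 h2, h1⟩
    · rintro ⟨h1, h2⟩
      exact ⟨h2, (hmemF p).1 h1⟩
  rw [interiorCubeCount, hseteq, Set.ncard_coe_finset]
end

section
/- Let P ⊆ ℝ^d be a finite union of closed integral unit cubes and let I ⊆ {1,…,d}. Then the number of v ∈ ℤ^d such that the relatively open integral unit cube B(v,I) is contained in P equals the number of points x ∈ P such that x_i ∈ ℤ + 1/2 for every i ∈ I and x_i ∈ ℤ for every i ∉ I. -/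
section

variable {d : ℕ} (I : Finset (Fin d))

noncomputable def cubeCenter (v : Fin d → ℤ) : Fin d → ℝ :=
  fun i => v i + if i ∈ I then 1 / 2 else 0

theorem cubeCenter_mem_openCube (v : Fin d → ℤ) : cubeCenter I v ∈ openCube v I := by
  intro i
  constructor
  · intro hi
    simp only [cubeCenter, if_pos hi]
    constructor <;> linarith
  · intro hi
    simp [cubeCenter, if_neg hi]

theorem cubeCenter_injective : Function.Injective (cubeCenter I) := by
  intro v w h
  funext i
  exact_mod_cast add_right_cancel (congrFun h i)

theorem Int.eq_of_le_add_half_le {a b : ℤ} (h₁ : (a : ℝ) ≤ b + 1 / 2) (h₂ : (b : ℝ) + 1 / 2 ≤ a + 1) :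
    a = b := by
  have hab : a < b + 1 := by exact_mod_cast (by linarith : (a : ℝ) < b + 1)
  have hba : b < a + 1 := by exact_mod_cast (by linarith : (b : ℝ) < a + 1)
  omega

theorem openCube_subset_closedCube_of_cubeCenter_mem {v w : Fin d → ℤ}
    (h : cubeCenter I v ∈ closedCube w) : openCube v I ⊆ closedCube w := by
  intro x hx i
  by_cases hi : i ∈ I
  · have hci := h i
    simp only [cubeCenter, if_pos hi] at hci
    rw [Int.eq_of_le_add_half_le hci.1 hci.2]
    exact ⟨((hx i).1 hi).1.le, ((hx i).1 hi).2.le⟩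
  · simpa [(hx i).2 hi, cubeCenter, if_neg hi] using h i

theorem openCube_subset_biUnion_closedCube_iff (S : Set (Fin d → ℤ)) (v : Fin d → ℤ) :
    openCube v I ⊆ ⋃ w ∈ S, closedCube w ↔ cubeCenter I v ∈ ⋃ w ∈ S, closedCube w := by
  refine ⟨fun h => h (cubeCenter_mem_openCube I v), fun h => ?_⟩
  obtain ⟨w, hw, hcw⟩ := Set.mem_iUnion₂.mp h
  exact (openCube_subset_closedCube_of_cubeCenter_mem I hcw).trans (Set.subset_biUnion_of_mem hw)

theorem range_cubeCenter :
    Set.range (cubeCenter I) = {x : Fin d → ℝ | ∀ i,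
      (i ∈ I → ∃ m : ℤ, x i = (m : ℝ) + 1 / 2) ∧ (i ∉ I → ∃ m : ℤ, x i = (m : ℝ))} := by
  ext x
  constructor
  · rintro ⟨v, rfl⟩ i
    exact ⟨fun hi => ⟨v i, by simp [cubeCenter, hi]⟩, fun hi => ⟨v i, by simp [cubeCenter, hi]⟩⟩
  · intro hx
    have hcoord : ∀ i, ∃ m : ℤ, x i = m + if i ∈ I then 1 / 2 else 0 := by
      intro i
      by_cases hi : i ∈ I
      · simpa [hi] using (hx i).1 hi
      · simpa [hi] using (hx i).2 hi
    choose v hv using hcoord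
    exact ⟨v, funext fun i => (hv i).symm⟩

end

/-- Counting the relatively open integral unit cubes of free-coordinate set `I`
contained in `P` is the same as counting the points of `P` whose coordinates in `I`
are half-integers and whose remaining coordinates are integers. -/
theorem cube_count_eq_half_integer_point_count (d : ℕ) (S : Finset (Fin d → ℤ))
    (P : Set (Fin d → ℝ)) (hP : P = ⋃ v ∈ S, closedCube v)
    (I : Finset (Fin d)) :
    {v : Fin d → ℤ | openCube v I ⊆ P}.ncard
      = {x : Fin d → ℝ | x ∈ P ∧ ∀ i,
          (i ∈ I → ∃ m : ℤ, x i = (m : ℝ) + 1 / 2) ∧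
          (i ∉ I → ∃ m : ℤ, x i = (m : ℝ))}.ncard := by
  have hcubes : {v : Fin d → ℤ | openCube v I ⊆ P} = cubeCenter I ⁻¹' P := by
    ext v
    simp only [Set.mem_ofPred_eq, Set.mem_preimage, hP]
    exact openCube_subset_biUnion_closedCube_iff I _ v
  have hpoints : {x : Fin d → ℝ | x ∈ P ∧ ∀ i,
      (i ∈ I → ∃ m : ℤ, x i = (m : ℝ) + 1 / 2) ∧ (i ∉ I → ∃ m : ℤ, x i = (m : ℝ))}
      = cubeCenter I '' (cubeCenter I ⁻¹' P) := by
    rw [Set.image_preimage_eq_inter_range, range_cubeCenter]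
    rfl
  rw [hcubes, hpoints, Set.ncard_image_of_injective _ (cubeCenter_injective I)]
end
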